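/- Let (Ω, ℱ, ℙ) be a probability space carrying two sequences (A_N)_N, (B_N)_N of random real symmetric N×N matrices such that rank(A_N(ω) − B_N(ω)) ≤ 1 for all ω ∈ Ω and all N. Let σ_N and μ_N denote the eigenvalue distribution measures of A_N and B_N respectively. If (μ_N)_N converges weakly in probability to the semicircle law σ_sc, then (σ_N)_N also converges weakly in probability to σ_sc. -/

import Mathlib

open MeasureTheory Filter
open scoped ENNReal Topology

open scoped Classical in
/-- The eigenvalue distribution measure `(1/N) ∑ δ_{λ_i}` of a real symmetric matrix. -/
noncomputable def evMeasure {N : ℕ} (A : Matrix (Fin N) (Fin N) ℝ) : Measure ℝ :=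
  if h : A.IsHermitian then ((N : ℝ≥0∞))⁻¹ • ∑ i, Measure.dirac (h.eigenvalues i) else 0

/-- The semicircle distribution. -/
noncomputable def semicircle : Measure ℝ :=
  volume.withDensity fun x => ENNReal.ofReal (Real.sqrt (4 - x ^ 2) / (2 * Real.pi))

/-!
If `rank (A - B) ≤ r`, the eigenvalue counting functions `t ↦ #{i | λᵢ < t}` of `A` and `B`
differ by at most `r`: otherwise, counting dimensions, the span of the eigenvectors of `A` with
eigenvalue `< t`, that of the eigenvectors of `B` with eigenvalue `≥ t`, and the kernel of `A - B`
would share a vector `x ≠ 0`, and `⟪x, A x⟫ < t ‖x‖² ≤ ⟪x, B x⟫ = ⟪x, A x⟫`. So `σ_N` and `μ_N` give every interval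
masses that differ by `O(1/N)`. A bounded continuous `f` is uniformly close on `[-3, 3)` to a step
function with finitely many steps, whose integrals against `σ_N` and `μ_N` differ by `O(1/N)`.
Outside `[-3, 3)`, the mass of `σ_N` is that of `μ_N` up to `O(1/N)`, and the latter is bounded by
the integral against `μ_N` of a continuous cutoff vanishing on `[-2, 2]`, which tends to `0` in
probability because the semicircle law lives on `[-2, 2]`.
-/

open Finset Module
open scoped InnerProductSpace

theorem Orthonormal.inner_eq_zero_of_mem_span_image {𝕜 E ι : Type*} [RCLike 𝕜]
    [NormedAddCommGroup E] [InnerProductSpace 𝕜 E] {v : ι → E} (hv : Orthonormal 𝕜 v)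
    {s : Set ι} {x : E} (hx : x ∈ Submodule.span 𝕜 (v '' s)) {i : ι} (hi : i ∉ s) :
    ⟪v i, x⟫_𝕜 = 0 := by
  obtain ⟨l, hl, rfl⟩ := Finsupp.mem_span_image_iff_linearCombination 𝕜 |>.mp hx
  exact inner_eq_zero_symm.mp (hv.inner_finsupp_eq_zero hi hl)

theorem LinearIndependent.finrank_span_image {K V ι : Type*} [DivisionRing K]
    [AddCommGroup V] [Module K V] [Fintype ι] {v : ι → V} (hv : LinearIndependent K v)
    (p : ι → Prop) [DecidablePred p] :
    finrank K (Submodule.span K (v '' {i | p i})) = #{i | p i} := by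
  rw [Set.image_eq_range]
  exact (finrank_span_eq_card (hv.comp _ Subtype.val_injective)).trans (Fintype.card_subtype _)

theorem Matrix.rank_neg {m n R : Type*} [Fintype n] [DecidableEq n] [CommRing R]
    (M : Matrix m n R) : (-M).rank = M.rank := by
  rw [rank, rank, ← toLin'_apply', ← toLin'_apply', map_neg, LinearMap.range_neg]

theorem Matrix.rank_eq_finrank_range_toEuclideanLin {𝕜 m n : Type*} [RCLike 𝕜] [Fintype m]
    [Fintype n] [DecidableEq n] (M : Matrix m n 𝕜) :
    M.rank = finrank 𝕜 (LinearMap.range (toEuclideanLin M)) := by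
  rw [rank_eq_finrank_range_toLin M (PiLp.basisFun 2 𝕜 m) (PiLp.basisFun 2 𝕜 n),
    ← toLpLin_eq_toLin]

namespace Matrix.IsHermitian

variable {𝕜 : Type*} [RCLike 𝕜] {n : Type*} [Fintype n] [DecidableEq n] {A B : Matrix n n 𝕜}

theorem toEuclideanLin_eigenvectorBasis (hA : A.IsHermitian) (i : n) :
    toEuclideanLin A (hA.eigenvectorBasis i) = hA.eigenvalues i • hA.eigenvectorBasis i := by
  rw [toLpLin_apply, hA.mulVec_eigenvectorBasis]
  rfl

theorem toEuclideanLin_apply_eq_sum (hA : A.IsHermitian) (x : EuclideanSpace 𝕜 n) :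
    toEuclideanLin A x =
      ∑ i, (hA.eigenvalues i * ⟪hA.eigenvectorBasis i, x⟫_𝕜) • hA.eigenvectorBasis i := by
  conv_lhs => rw [← hA.eigenvectorBasis.sum_repr' x, map_sum]
  simp only [map_smul, toEuclideanLin_eigenvectorBasis, smul_smul,
    RCLike.real_smul_eq_coe_smul (K := 𝕜), mul_comm]

theorem re_inner_toEuclideanLin_self (hA : A.IsHermitian) (x : EuclideanSpace 𝕜 n) :
    RCLike.re ⟪x, toEuclideanLin A x⟫_𝕜 =
      ∑ i, hA.eigenvalues i * ‖⟪hA.eigenvectorBasis i, x⟫_𝕜‖ ^ 2 := by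
  simp only [hA.toEuclideanLin_apply_eq_sum, inner_sum, inner_smul_right, map_sum]
  refine Finset.sum_congr rfl fun i _ => ?_
  rw [← inner_conj_symm x, mul_assoc, RCLike.mul_conj]
  norm_cast

section QuadraticForm

variable (hA : A.IsHermitian) {t : ℝ} {x : EuclideanSpace 𝕜 n}
include hA

theorem re_inner_toEuclideanLin_self_lt
    (hx : x ∈ Submodule.span 𝕜 (hA.eigenvectorBasis '' {i | hA.eigenvalues i < t}))
    (hx0 : x ≠ 0) : RCLike.re ⟪x, toEuclideanLin A x⟫_𝕜 < t * ‖x‖ ^ 2 := by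
  have hzero : ∀ i, t ≤ hA.eigenvalues i → ⟪hA.eigenvectorBasis i, x⟫_𝕜 = 0 := fun i hi =>
    hA.eigenvectorBasis.orthonormal.inner_eq_zero_of_mem_span_image hx (not_lt.mpr hi)
  obtain ⟨j, hj⟩ : ∃ j, ⟪hA.eigenvectorBasis j, x⟫_𝕜 ≠ 0 := by
    by_contra! h
    exact hx0 (by simpa [h] using (hA.eigenvectorBasis.sum_repr' x).symm)
  rw [hA.re_inner_toEuclideanLin_self, ← hA.eigenvectorBasis.sum_sq_norm_inner_right, mul_sum]
  refine sum_lt_sum (fun i _ => ?_) ⟨j, mem_univ j, ?_⟩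
  · rcases lt_or_ge (hA.eigenvalues i) t with hi | hi
    · gcongr
    · simp [hzero i hi]
  · have hjt : hA.eigenvalues j < t := not_le.mp fun h => hj (hzero j h)
    gcongr

theorem mul_norm_sq_le_re_inner_toEuclideanLin_self
    (hx : x ∈ Submodule.span 𝕜 (hA.eigenvectorBasis '' {i | t ≤ hA.eigenvalues i})) :
    t * ‖x‖ ^ 2 ≤ RCLike.re ⟪x, toEuclideanLin A x⟫_𝕜 := by
  rw [hA.re_inner_toEuclideanLin_self, ← hA.eigenvectorBasis.sum_sq_norm_inner_right, mul_sum]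
  refine sum_le_sum fun i _ => ?_
  rcases le_or_gt t (hA.eigenvalues i) with hi | hi
  · gcongr
  · simp [hA.eigenvectorBasis.orthonormal.inner_eq_zero_of_mem_span_image hx (not_le.mpr hi)]

end QuadraticForm

theorem card_eigenvalues_lt_le_add_rank (hA : A.IsHermitian) (hB : B.IsHermitian) (t : ℝ) :
    #{i | hA.eigenvalues i < t} ≤ #{i | hB.eigenvalues i < t} + (A - B).rank := by
  set V := Submodule.span 𝕜 (hA.eigenvectorBasis '' {i | hA.eigenvalues i < t})
  set W := Submodule.span 𝕜 (hB.eigenvectorBasis '' {i | t ≤ hB.eigenvalues i})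
  have hdisj : Disjoint (V ⊓ W) (LinearMap.ker (toEuclideanLin (A - B))) := by
    rw [Submodule.disjoint_def]
    rintro x ⟨hxV, hxW⟩ hx
    by_contra hx0
    have hAB : toEuclideanLin A x = toEuclideanLin B x := by
      simpa [sub_eq_zero] using hx
    have hlt := hA.re_inner_toEuclideanLin_self_lt hxV hx0
    have hle := hB.mul_norm_sq_le_re_inner_toEuclideanLin_self hxW
    rw [hAB] at hlt
    linarith
  have hV : finrank 𝕜 V = #{i | hA.eigenvalues i < t} :=
    hA.eigenvectorBasis.orthonormal.linearIndependent.finrank_span_image _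
  have hW : finrank 𝕜 W = #{i | t ≤ hB.eigenvalues i} :=
    hB.eigenvectorBasis.orthonormal.linearIndependent.finrank_span_image _
  have hB_split := card_filter_add_card_filter_not (s := univ) (fun i => hB.eigenvalues i < t)
  simp only [not_lt, card_univ] at hB_split
  have hker := Submodule.finrank_add_finrank_le_of_disjoint hdisj
  have hrank := LinearMap.finrank_range_add_finrank_ker (toEuclideanLin (A - B))
  have hsup := Submodule.finrank_sup_add_finrank_inf_eq V W
  have hsup_le := (V ⊔ W).finrank_le
  rw [finrank_euclideanSpace] at hker hrank hsup_le
  rw [rank_eq_finrank_range_toEuclideanLin]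
  omega

theorem abs_card_eigenvalues_lt_sub_le (hA : A.IsHermitian) (hB : B.IsHermitian) (t : ℝ) :
    |(#{i | hA.eigenvalues i < t} : ℝ) - #{i | hB.eigenvalues i < t}| ≤ (A - B).rank := by
  have hAB := hA.card_eigenvalues_lt_le_add_rank hB t
  have hBA := hB.card_eigenvalues_lt_le_add_rank hA t
  rw [← neg_sub, rank_neg] at hBA
  have hAB' : (#{i | hA.eigenvalues i < t} : ℝ) ≤ #{i | hB.eigenvalues i < t} + (A - B).rank := by
    exact_mod_cast hAB
  have hBA' : (#{i | hB.eigenvalues i < t} : ℝ) ≤ #{i | hA.eigenvalues i < t} + (A - B).rank := by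
    exact_mod_cast hBA
  exact abs_le.mpr ⟨by linarith, by linarith⟩

end Matrix.IsHermitian

section Counting

variable {ι : Type*} [Fintype ι]

theorem card_filter_lt_add_card_filter_mem_Ico (lam : ι → ℝ) {a b : ℝ} (hab : a ≤ b) :
    #{i | lam i < a} + #{i | lam i ∈ Set.Ico a b} = #{i | lam i < b} := by
  classical
  rw [← card_union_of_disjoint (disjoint_filter.mpr fun i _ h h' => (not_le.mpr h) h'.1)]
  congr 1
  ext i
  simp only [mem_union, mem_filter, mem_univ, true_and, Set.mem_Ico]
  constructor
  · rintro (h | h)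
    exacts [h.trans_le hab, h.2]
  · intro h
    exact (lt_or_ge (lam i) a).imp_right fun h' => ⟨h', h⟩

noncomputable def stepApprox (f : ℝ → ℝ) (p : ℕ → ℝ) (m : ℕ) (x : ℝ) : ℝ :=
  ∑ j ∈ range m, (Set.Ico (p j) (p (j + 1))).indicator (fun _ => f (p j)) x

variable {f : ℝ → ℝ} {p : ℕ → ℝ} {m : ℕ}

theorem stepApprox_eq_zero (hp : Monotone p) {x : ℝ} (hx : x ∉ Set.Ico (p 0) (p m)) :
    stepApprox f p m x = 0 :=
  sum_eq_zero fun j hj => Set.indicator_of_notMem (fun h => hx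
    ⟨(hp (Nat.zero_le j)).trans h.1, h.2.trans_le (hp (mem_range.mp hj))⟩) _

theorem stepApprox_eq (hp : Monotone p) {j : ℕ} (hj : j < m) {x : ℝ}
    (hx : x ∈ Set.Ico (p j) (p (j + 1))) : stepApprox f p m x = f (p j) := by
  rw [stepApprox, sum_eq_single_of_mem j (mem_range.mpr hj), Set.indicator_of_mem hx]
  intro k _ hkj
  exact Set.indicator_of_notMem
    (Set.disjoint_left.mp (hp.pairwise_disjoint_on_Ico_succ hkj.symm) hx) _

theorem abs_sub_stepApprox_le (hp : Monotone p) {δ : ℝ}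
    (hosc : ∀ j < m, ∀ x ∈ Set.Ico (p j) (p (j + 1)), |f x - f (p j)| ≤ δ)
    {x : ℝ} (hx : x ∈ Set.Ico (p 0) (p m)) : |f x - stepApprox f p m x| ≤ δ := by
  obtain ⟨j, hj, hxj⟩ := Set.mem_iUnion₂.mp (Ico_subset_biUnion_Ico m p hx)
  rw [stepApprox_eq hp (mem_range.mp hj) hxj]
  exact hosc j (mem_range.mp hj) x hxj

theorem sum_stepApprox (lam : ι → ℝ) :
    ∑ i, stepApprox f p m (lam i) =
      ∑ j ∈ range m, f (p j) * #{i | lam i ∈ Set.Ico (p j) (p (j + 1))} := by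
  simp only [stepApprox, Set.indicator_apply]
  rw [sum_comm]
  refine sum_congr rfl fun j _ => ?_
  rw [← sum_filter, sum_const, nsmul_eq_mul, mul_comm]

theorem abs_sub_sum_stepApprox_le (hp : Monotone p) {δ M : ℝ} (hδ : 0 ≤ δ)
    (hosc : ∀ j < m, ∀ x ∈ Set.Ico (p j) (p (j + 1)), |f x - f (p j)| ≤ δ)
    (hM : ∀ x, |f x| ≤ M) (lam : ι → ℝ) :
    |∑ i, f (lam i) - ∑ i, stepApprox f p m (lam i)| ≤
      δ * Fintype.card ι + M * #{i | lam i ∉ Set.Ico (p 0) (p m)} := by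
  calc _ = |∑ i, (f (lam i) - stepApprox f p m (lam i))| := by rw [sum_sub_distrib]
    _ ≤ ∑ i, (δ + M * if lam i ∉ Set.Ico (p 0) (p m) then 1 else 0) := by
      refine (abs_sum_le_sum_abs _ _).trans (sum_le_sum fun i _ => ?_)
      by_cases hi : lam i ∈ Set.Ico (p 0) (p m)
      · simpa [hi] using abs_sub_stepApprox_le hp hosc hi
      · simpa [hi, stepApprox_eq_zero hp hi] using (hM (lam i)).trans (le_add_of_nonneg_left hδ)
    _ = _ := by rw [sum_add_distrib, ← mul_sum, sum_boole]; simp [mul_comm]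

variable {r : ℝ} (lamA lamB : ι → ℝ)
  (hcount : ∀ t, |(#{i | lamA i < t} : ℝ) - #{i | lamB i < t}| ≤ r)
include hcount

theorem abs_card_filter_mem_Ico_sub_le {a b : ℝ} (hab : a ≤ b) :
    |(#{i | lamA i ∈ Set.Ico a b} : ℝ) - #{i | lamB i ∈ Set.Ico a b}| ≤ 2 * r := by
  have hA := card_filter_lt_add_card_filter_mem_Ico lamA hab
  have hB := card_filter_lt_add_card_filter_mem_Ico lamB hab
  have ha := abs_le.mp (hcount a)
  have hb := abs_le.mp (hcount b)
  rw [abs_le]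
  constructor <;> push_cast [← hA, ← hB] at ha hb ⊢ <;> linarith

theorem abs_sum_stepApprox_sub_le (hp : Monotone p) {M : ℝ} (hM : ∀ x, |f x| ≤ M) :
    |∑ i, stepApprox f p m (lamA i) - ∑ i, stepApprox f p m (lamB i)| ≤ m * (M * (2 * r)) := by
  rw [sum_stepApprox, sum_stepApprox, ← sum_sub_distrib]
  calc _ ≤ ∑ j ∈ range m, |f (p j) * #{i | lamA i ∈ Set.Ico (p j) (p (j + 1))} -
        f (p j) * #{i | lamB i ∈ Set.Ico (p j) (p (j + 1))}| := abs_sum_le_sum_abs _ _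
    _ ≤ ∑ j ∈ range m, M * (2 * r) := sum_le_sum fun j _ => ?_
    _ = _ := by simp
  rw [← mul_sub, abs_mul]
  exact mul_le_mul (hM _) (abs_card_filter_mem_Ico_sub_le lamA lamB hcount (hp j.le_succ))
    (abs_nonneg _) ((abs_nonneg _).trans (hM 0))

theorem card_filter_notMem_Ico_le {a b : ℝ} (hab : a ≤ b) :
    (#{i | lamA i ∉ Set.Ico a b} : ℝ) ≤ #{i | lamB i ∉ Set.Ico a b} + 2 * r := by
  have hA := card_filter_add_card_filter_not (s := univ) (fun i => lamA i ∈ Set.Ico a b)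
  have hB := card_filter_add_card_filter_not (s := univ) (fun i => lamB i ∈ Set.Ico a b)
  have h := (abs_le.mp (abs_card_filter_mem_Ico_sub_le lamA lamB hcount hab)).1
  rw [← hB] at hA
  have : (#{i | lamA i ∈ Set.Ico a b} : ℝ) + #{i | lamA i ∉ Set.Ico a b} =
      #{i | lamB i ∈ Set.Ico a b} + #{i | lamB i ∉ Set.Ico a b} := by exact_mod_cast hA
  linarith

theorem abs_sum_sub_sum_le (hp : Monotone p) {δ M : ℝ} (hδ : 0 ≤ δ)
    (hosc : ∀ j < m, ∀ x ∈ Set.Ico (p j) (p (j + 1)), |f x - f (p j)| ≤ δ)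
    (hM : ∀ x, |f x| ≤ M) {k : ℝ → ℝ} (hk0 : ∀ x, 0 ≤ k x)
    (hk1 : ∀ x ∉ Set.Ico (p 0) (p m), 1 ≤ k x) :
    |∑ i, f (lamA i) - ∑ i, f (lamB i)| ≤
      2 * δ * Fintype.card ι + 2 * M * ∑ i, k (lamB i) + 2 * r * (m + 1) * M := by
  have hM0 : 0 ≤ M := (abs_nonneg _).trans (hM 0)
  have hA := abs_sub_sum_stepApprox_le hp hδ hosc hM lamA
  have hB := abs_sub_sum_stepApprox_le hp hδ hosc hM lamB
  have hstep := abs_sum_stepApprox_sub_le (m := m) lamA lamB hcount hp hM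
  have houtA := mul_le_mul_of_nonneg_left
    (card_filter_notMem_Ico_le lamA lamB hcount (hp (Nat.zero_le m))) hM0
  have houtB : M * #{i | lamB i ∉ Set.Ico (p 0) (p m)} ≤ M * ∑ i, k (lamB i) := by
    refine mul_le_mul_of_nonneg_left ?_ hM0
    rw [natCast_card_filter]
    refine sum_le_sum fun i _ => ?_
    by_cases h : lamB i ∈ Set.Ico (p 0) (p m) <;> simp [h, hk0, hk1]
  have h1 := abs_sub_le (∑ i, f (lamA i)) (∑ i, stepApprox f p m (lamA i)) (∑ i, f (lamB i))
  have h2 := abs_sub_le (∑ i, stepApprox f p m (lamA i)) (∑ i, stepApprox f p m (lamB i))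
    (∑ i, f (lamB i))
  rw [abs_sub_comm] at hB
  linarith

end Counting

theorem exists_partition_abs_sub_le {f : ℝ → ℝ} {a b : ℝ} (hab : a ≤ b)
    (hf : ContinuousOn f (Set.Icc a b)) {δ : ℝ} (hδ : 0 < δ) :
    ∃ (p : ℕ → ℝ) (m : ℕ), Monotone p ∧ p 0 = a ∧ p m = b ∧
      ∀ j < m, ∀ x ∈ Set.Ico (p j) (p (j + 1)), |f x - f (p j)| ≤ δ := by
  obtain ⟨η, hη, hfη⟩ :=
    Metric.uniformContinuousOn_iff.mp (isCompact_Icc.uniformContinuousOn_of_continuous hf) δ hδ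
  obtain ⟨m, hm⟩ := exists_nat_gt ((b - a) / η)
  have hm0 : (0 : ℝ) < m := (div_nonneg (sub_nonneg.mpr hab) hη.le).trans_lt hm
  set p : ℕ → ℝ := fun j => a + (b - a) * j / m
  have hp : Monotone p := fun i j hij => by
    have : (i : ℝ) ≤ j := by exact_mod_cast hij
    have := sub_nonneg.mpr hab
    simp only [p]
    gcongr
  have hpm : p m = b := by simp only [p]; field_simp; ring
  refine ⟨p, m, hp, by simp [p], hpm, fun j hj x hx => ?_⟩
  have hstep : p (j + 1) - p j < η := by
    have : p (j + 1) - p j = (b - a) / m := by simp only [p]; push_cast; ring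
    rw [this, div_lt_iff₀ hm0]
    rw [div_lt_iff₀ hη] at hm
    linarith
  have hpj : p j ∈ Set.Icc a b := ⟨by simpa [p] using hp (Nat.zero_le j), hpm ▸ hp hj.le⟩
  have hxI : x ∈ Set.Icc a b :=
    ⟨hpj.1.trans hx.1, (hx.2.trans_le (hpm ▸ hp (Nat.succ_le_of_lt hj))).le⟩
  have hdist : dist x (p j) < η := by
    rw [Real.dist_eq, abs_of_nonneg (sub_nonneg.mpr hx.1)]
    linarith [hx.2]
  simpa [Real.dist_eq] using (hfη x hxI (p j) hpj hdist).le

theorem integral_evMeasure {N : ℕ} {A : Matrix (Fin N) (Fin N) ℝ} (hA : A.IsHermitian)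
    (f : ℝ → ℝ) : ∫ x, f x ∂evMeasure A = (N : ℝ)⁻¹ * ∑ i, f (hA.eigenvalues i) := by
  classical
  rw [evMeasure, dif_pos hA, integral_smul_measure,
    integral_finsetSum_measure fun i _ => integrable_dirac enorm_lt_top]
  simp [integral_dirac]

theorem ae_abs_le_two_semicircle : ∀ᵐ x ∂semicircle, |x| ≤ 2 := by
  rw [semicircle, ae_withDensity_iff (by fun_prop)]
  refine Eventually.of_forall fun x hx => ?_
  by_contra! h
  apply hx
  rw [Real.sqrt_eq_zero'.mpr (by nlinarith [sq_abs x]), zero_div, ENNReal.ofReal_zero]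

noncomputable def tailCutoff : BoundedContinuousFunction ℝ ℝ :=
  .ofNormedAddCommGroup (fun x => min 1 (max 0 (|x| - 2))) (by fun_prop) 1 fun x => by
    rw [Real.norm_eq_abs, abs_of_nonneg (le_min zero_le_one (le_max_left _ _))]
    exact min_le_left _ _

theorem tailCutoff_apply (x : ℝ) : tailCutoff x = min 1 (max 0 (|x| - 2)) := rfl

theorem tailCutoff_nonneg (x : ℝ) : 0 ≤ tailCutoff x :=
  le_min zero_le_one (le_max_left _ _)

theorem tailCutoff_eq_zero {x : ℝ} (hx : |x| ≤ 2) : tailCutoff x = 0 := by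
  rw [tailCutoff_apply, max_eq_left (by linarith), min_eq_right zero_le_one]

theorem tailCutoff_eq_one {x : ℝ} (hx : x ∉ Set.Ico (-3) 3) : tailCutoff x = 1 := by
  have : 3 ≤ |x| := by
    rw [Set.mem_Ico, not_and_or, not_le, not_lt] at hx
    rcases hx with hx | hx
    · exact le_abs'.mpr (Or.inl (by linarith))
    · exact hx.trans (le_abs_self x)
  rw [tailCutoff_apply, max_eq_right (by linarith), min_eq_left (by linarith)]

theorem integral_tailCutoff_semicircle : ∫ x, tailCutoff x ∂semicircle = 0 := by
  rw [integral_congr_ae (ae_abs_le_two_semicircle.mono fun x hx => tailCutoff_eq_zero hx),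
    integral_zero]

theorem exists_abs_integral_evMeasure_sub_le (f : BoundedContinuousFunction ℝ ℝ) {δ : ℝ}
    (hδ : 0 < δ) (r : ℕ) :
    ∃ C, 0 ≤ C ∧ ∀ {N : ℕ} {A B : Matrix (Fin N) (Fin N) ℝ}, A.IsHermitian → B.IsHermitian →
      (A - B).rank ≤ r →
      |∫ x, f x ∂evMeasure A - ∫ x, f x ∂evMeasure B| ≤
        δ + C * (∫ x, tailCutoff x ∂evMeasure B + (N : ℝ)⁻¹) := by
  obtain ⟨p, m, hp, hp0, hpm, hosc⟩ :=
    exists_partition_abs_sub_le (by norm_num : (-3 : ℝ) ≤ 3) f.continuous.continuousOn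
      (half_pos hδ)
  refine ⟨2 * ‖f‖ * (r * (m + 1) + 1), by positivity, fun {N A B} hA hB hr => ?_⟩
  have hcount (t : ℝ) : |(#{i | hA.eigenvalues i < t} : ℝ) - #{i | hB.eigenvalues i < t}| ≤ r :=
    (hA.abs_card_eigenvalues_lt_sub_le hB t).trans (by exact_mod_cast hr)
  have hsum := abs_sum_sub_sum_le _ _ hcount hp (half_pos hδ).le hosc
    (fun x => by simpa using f.norm_coe_le_norm x) tailCutoff_nonneg
    (fun x hx => (tailCutoff_eq_one (hp0 ▸ hpm ▸ hx)).ge)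
  rw [Fintype.card_fin] at hsum
  rw [integral_evMeasure hA, integral_evMeasure hB, integral_evMeasure hB, ← mul_sub, abs_mul,
    abs_inv, Nat.abs_cast]
  set S := ∑ i, tailCutoff (hB.eigenvalues i)
  have hS : 0 ≤ S := sum_nonneg fun i _ => tailCutoff_nonneg _
  have hN : (N : ℝ)⁻¹ * N ≤ 1 := by
    rcases N.eq_zero_or_pos with rfl | hN
    · simp
    · rw [inv_mul_cancel₀ (by positivity)]
  have h0 : δ * ((N : ℝ)⁻¹ * N) ≤ δ := mul_le_of_le_one_right hδ.le hN
  have h1 : 0 ≤ 2 * ‖f‖ * (r * (m + 1)) * ((N : ℝ)⁻¹ * S) := by positivity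
  have h2 : 0 ≤ 2 * ‖f‖ * (N : ℝ)⁻¹ := by positivity
  calc _ ≤ (N : ℝ)⁻¹ * (δ * N + 2 * ‖f‖ * S + 2 * r * (m + 1) * ‖f‖) := by
        gcongr
        linarith
    _ ≤ _ := by linarith

theorem tendsto_measure_of_eventually_subset_union {Ω α : Type*} [MeasurableSpace Ω]
    {μ : Measure Ω} {l : Filter α} {s t u : α → Set Ω} (hsub : ∀ᶠ a in l, s a ⊆ t a ∪ u a)
    (ht : Tendsto (fun a => μ (t a)) l (𝓝 0)) (hu : Tendsto (fun a => μ (u a)) l (𝓝 0)) :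
    Tendsto (fun a => μ (s a)) l (𝓝 0) := by
  refine tendsto_of_tendsto_of_tendsto_of_le_of_le' tendsto_const_nhds
    (by simpa using ht.add hu) (Eventually.of_forall fun _ => zero_le) ?_
  filter_upwards [hsub] with a ha
  exact (measure_mono ha).trans (measure_union_le _ _)

theorem rank_one_perturbation_semicircle_general {Ω : Type*} [MeasurableSpace Ω]
    (ℙ : Measure Ω)
    (A B : (N : ℕ) → Ω → Matrix (Fin N) (Fin N) ℝ)
    (hAH : ∀ N ω, (A N ω).IsHermitian) (hBH : ∀ N ω, (B N ω).IsHermitian)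
    (hrank : ∀ N ω, (A N ω - B N ω).rank ≤ 1)
    (hB : ∀ (f : BoundedContinuousFunction ℝ ℝ) (ε : ℝ), 0 < ε →
      Tendsto (fun N : ℕ =>
          ℙ {ω | ε < |(∫ x, f x ∂(evMeasure (B N ω))) - ∫ x, f x ∂semicircle|})
        atTop (nhds 0)) :
    ∀ (f : BoundedContinuousFunction ℝ ℝ) (ε : ℝ), 0 < ε →
      Tendsto (fun N : ℕ =>
          ℙ {ω | ε < |(∫ x, f x ∂(evMeasure (A N ω))) - ∫ x, f x ∂semicircle|})
        atTop (nhds 0) := by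
  intro f ε hε
  obtain ⟨C, hC0, hC⟩ := exists_abs_integral_evMeasure_sub_le f (δ := ε / 3) (by positivity) 1
  set η := ε / (6 * (C + 1))
  have hη : 0 < η := by positivity
  have hCη : C * (η + η) ≤ ε / 3 := by
    have : C * (η + η) = ε / 3 * (C / (C + 1)) := by simp only [η]; field_simp; ring
    rw [this]
    exact mul_le_of_le_one_right (by positivity) ((div_le_one (by positivity)).mpr (by linarith))
  refine tendsto_measure_of_eventually_subset_union ?_ (hB f (ε / 3) (by positivity))
    (hB tailCutoff η hη)
  filter_upwards [tendsto_inv_atTop_nhds_zero_nat.eventually (ge_mem_nhds hη)] with N hN ω hω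
  by_contra h
  simp only [Set.mem_union, Set.mem_ofPred_eq, not_or, not_lt, integral_tailCutoff_semicircle,
    sub_zero] at h hω
  have hclose := hC (hAH N ω) (hBH N ω) (hrank N ω)
  have htri := abs_sub_le (∫ x, f x ∂evMeasure (A N ω)) (∫ x, f x ∂evMeasure (B N ω))
    (∫ x, f x ∂semicircle)
  have := mul_le_mul_of_nonneg_left (add_le_add ((le_abs_self _).trans h.2) hN) hC0
  linarith

/-- Rank-one perturbations preserve weak convergence in probability to the semicircle law:
if `rank (A_N(ω) - B_N(ω)) ≤ 1` for all `ω` and the eigenvalue distribution measures of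
`B_N` converge weakly in probability to the semicircle law, then so do those of `A_N`. -/
theorem rank_one_perturbation_semicircle {Ω : Type*} [MeasurableSpace Ω]
    (ℙ : Measure Ω) [IsProbabilityMeasure ℙ]
    (A B : (N : ℕ) → Ω → Matrix (Fin N) (Fin N) ℝ)
    (hAH : ∀ N ω, (A N ω).IsHermitian) (hBH : ∀ N ω, (B N ω).IsHermitian)
    (hrank : ∀ N ω, (A N ω - B N ω).rank ≤ 1)
    (hB : ∀ (f : BoundedContinuousFunction ℝ ℝ) (ε : ℝ), 0 < ε →
      Tendsto (fun N : ℕ =>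
          ℙ {ω | ε < |(∫ x, f x ∂(evMeasure (B N ω))) - ∫ x, f x ∂semicircle|})
        atTop (nhds 0)) :
    ∀ (f : BoundedContinuousFunction ℝ ℝ) (ε : ℝ), 0 < ε →
      Tendsto (fun N : ℕ =>
          ℙ {ω | ε < |(∫ x, f x ∂(evMeasure (A N ω))) - ∫ x, f x ∂semicircle|})
        atTop (nhds 0) :=
  rank_one_perturbation_semicircle_general ℙ A B hAH hBH hrank hB
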